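/- If (x, y) ∈ Λ(S) \ 𝒫 and (x_k, y_k) := f^k(x, y) for k ≥ 0, then x_k → 0 and y_k → −∞ as k → ∞. -/
import Mathlib


noncomputable section

open Filter Topology

namespace TMH

/-- the trace map `f(x,y) = (x²(y−2)+2, x²y²(y−2)+2)` -/
def tmap (p : ℝ × ℝ) : ℝ × ℝ :=
  (p.1 ^ 2 * (p.2 - 2) + 2, p.1 ^ 2 * p.2 ^ 2 * (p.2 - 2) + 2)

/-- the strip `S = {(x,y) : |x| ≤ 1, y ≤ x² − 2}` -/
def S : Set (ℝ × ℝ) := {p | |p.1| ≤ 1 ∧ p.2 ≤ p.1 ^ 2 - 2}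

/-- the parabola `𝒫 = {(x,y) : y = x² − 2}` -/
def Par : Set (ℝ × ℝ) := {p | p.2 = p.1 ^ 2 - 2}

/-- the domain `𝒰` of the inverse branches `F_{±,+}` -/
def domU : Set (ℝ × ℝ) :=
  {p | p.1 < 2 ∧ p.2 < 2 ∧ 0 < p.2 - 4 * p.1 + 6} ∪
  {p | 2 < p.1 ∧ 2 < p.2 ∧ 0 < p.2 - 4 * p.1 + 6}

/-- the inverse branches `F_{ε,η}` of the trace map -/
def Fb (e h : ℝ) (p : ℝ × ℝ) : ℝ × ℝ :=
  (e * Real.sqrt ((2 - p.1) / (2 - h * Real.sqrt ((2 - p.2) / (2 - p.1)))),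
    h * Real.sqrt ((2 - p.2) / (2 - p.1)))

def F0 : ℝ × ℝ → ℝ × ℝ := Fb (-1) (-1)
def F1 : ℝ × ℝ → ℝ × ℝ := Fb 1 (-1)
def F2 : ℝ × ℝ → ℝ × ℝ := Fb (-1) 1
def F3 : ℝ × ℝ → ℝ × ℝ := Fb 1 1

end TMH
namespace TMH

/-- `Λ(S) = ⋂_{n ≥ 0} f^{−n}(S)`: points whose whole forward orbit stays in `S` -/
def LambdaS : Set (ℝ × ℝ) := {p | ∀ n : ℕ, tmap^[n] p ∈ S}

def Fsel (b : Bool) : ℝ × ℝ → ℝ × ℝ := if b then F1 else F0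

/-- `Fcomp ω n = F_{ω 0} ∘ F_{ω 1} ∘ ⋯ ∘ F_{ω (n−1)}` -/
def Fcomp (ω : ℕ → Bool) : ℕ → (ℝ × ℝ → ℝ × ℝ)
  | 0 => id
  | n + 1 => Fcomp ω n ∘ Fsel (ω n)

/-- the fiber `Λ_ω = ⋂_{n ≥ 1} (F_{ω_1} ∘ ⋯ ∘ F_{ω_n})(S)` -/
def Lambda (ω : ℕ → Bool) : Set (ℝ × ℝ) := ⋂ n : ℕ, Fcomp ω (n + 1) '' S

end TMH
namespace TMH

/-- **Lemma (escape of orbits in `Λ(S) \ 𝒫`).**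
If `(x,y) ∈ Λ(S) \ 𝒫` and `(x_k, y_k) = f^k(x,y)`, then `x_k → 0` and `y_k → −∞`. -/
theorem orbit_escape (p : ℝ × ℝ) (hp : p ∈ LambdaS \ Par) :
    Tendsto (fun k : ℕ => (tmap^[k] p).1) atTop (nhds 0) ∧
    Tendsto (fun k : ℕ => (tmap^[k] p).2) atTop atBot := by
  obtain ⟨hΛ, hPar⟩ := hp
  set q : ℕ → ℝ × ℝ := fun k => tmap^[k] p with hqdef
  have hS : ∀ k, q k ∈ S := hΛ
  have hstep : ∀ k, q (k + 1) = tmap (q k) := fun k =>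
    Function.iterate_succ_apply' _ _ _
  have hx : ∀ k, |(q k).1| ≤ 1 := fun k => (hS k).1
  have hy : ∀ k, (q k).2 ≤ (q k).1 ^ 2 - 2 := fun k => (hS k).2
  have hx2 : ∀ k, (q k).1 ^ 2 ≤ 1 := by
    intro k
    have h := abs_le.mp (hx k)
    nlinarith [h.1, h.2]
  have hy1 : ∀ k, (q k).2 ≤ -1 := fun k => le_trans (hy k) (by nlinarith [hx2 k])
  set D : ℕ → ℝ := fun k => (q k).1 ^ 2 - 2 - (q k).2 with hDdef
  have hD0 : 0 < D 0 := by
    have h1 : (q 0).2 ≤ (q 0).1 ^ 2 - 2 := hy 0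
    have h2 : (q 0).2 ≠ (q 0).1 ^ 2 - 2 := by
      have : q 0 = p := by simp [hqdef]
      rw [this]; exact hPar
    have := lt_of_le_of_ne h1 h2
    simp only [hDdef]
    linarith
  have hDrec : ∀ k, D (k + 1) = (q k).1 ^ 2 * ((q k).2 - 2) ^ 2 * D k := by
    intro k
    simp only [hDdef]
    rw [hstep k]
    simp only [tmap]
    ring
  have hxne : ∀ k, (q k).1 ≠ 0 := by
    intro k h
    have h1 := hx (k + 1)
    rw [hstep k] at h1
    simp only [tmap, h] at h1
    norm_num at h1
  have hband : ∀ k, 1 ≤ (q k).1 ^ 2 * (2 - (q k).2) ∧ (q k).1 ^ 2 * (2 - (q k).2) ≤ 3 := by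
    intro k
    have h1 := abs_le.mp (hx (k + 1))
    rw [hstep k] at h1
    simp only [tmap] at h1
    constructor <;> nlinarith [h1.1, h1.2]
  have hDpos : ∀ k, 0 < D k := by
    intro k
    induction k with
    | zero => exact hD0
    | succ n ih =>
      rw [hDrec n]
      have h1 : (0:ℝ) < (q n).1 ^ 2 := pow_two_pos_of_ne_zero (hxne n)
      have h2 : (0:ℝ) < ((q n).2 - 2) ^ 2 := by nlinarith [hy1 n]
      exact mul_pos (mul_pos h1 h2) ih
  have hDgrow : ∀ k, 3 * D k ≤ D (k + 1) := by
    intro k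
    rw [hDrec k]
    have h1 := (hband k).1
    have h2 := hy1 k
    have h3 := hDpos k
    nlinarith [mul_le_mul_of_nonneg_right h1 (le_of_lt h3)]
  have hDlow : ∀ k, 3 ^ k * D 0 ≤ D k := by
    intro k
    induction k with
    | zero => simp
    | succ n ih =>
      calc 3 ^ (n + 1) * D 0 = 3 * (3 ^ n * D 0) := by ring
        _ ≤ 3 * D n := by linarith
        _ ≤ D (n + 1) := hDgrow n
  have hylow : ∀ k, (q k).2 ≤ -1 - 3 ^ k * D 0 := by
    intro k
    have h1 := hDlow k
    have h2 := hx2 k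
    have hk : D k = (q k).1 ^ 2 - 2 - (q k).2 := rfl
    linarith
  have hyb : Tendsto (fun k : ℕ => (-1 : ℝ) - 3 ^ k * D 0) atTop atBot := by
    have h1 : Tendsto (fun k : ℕ => (3 : ℝ) ^ k) atTop atTop :=
      tendsto_pow_atTop_atTop_of_one_lt (by norm_num)
    have h2 : Tendsto (fun k : ℕ => (3 : ℝ) ^ k * D 0) atTop atTop :=
      h1.atTop_mul_const hD0
    have h3 : Tendsto (fun k : ℕ => -((3 : ℝ) ^ k * D 0)) atTop atBot :=
      tendsto_neg_atTop_atBot.comp h2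
    have := tendsto_atBot_add_const_left atTop (-1 : ℝ) h3
    simpa [sub_eq_add_neg] using this
  have hytend : Tendsto (fun k : ℕ => (q k).2) atTop atBot :=
    tendsto_atBot_mono hylow hyb
  refine ⟨?_, hytend⟩
  -- x part
  have hx2b : ∀ k, (q k).1 ^ 2 ≤ 3 / (2 - (q k).2) := by
    intro k
    have h1 := (hband k).2
    have h2 : (0 : ℝ) < 2 - (q k).2 := by have := hy1 k; linarith
    rw [le_div_iff₀ h2]
    linarith
  have hdenom : Tendsto (fun k : ℕ => 2 - (q k).2) atTop atTop := by
    have h1 : Tendsto (fun k : ℕ => -(q k).2) atTop atTop :=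
      tendsto_neg_atBot_atTop.comp hytend
    have := tendsto_atTop_add_const_left atTop (2 : ℝ) h1
    simpa [sub_eq_add_neg] using this
  have hbound : Tendsto (fun k : ℕ => 3 / (2 - (q k).2)) atTop (nhds 0) :=
    tendsto_const_nhds.div_atTop hdenom
  have hsq : Tendsto (fun k : ℕ => (q k).1 ^ 2) atTop (nhds 0) :=
    squeeze_zero (fun k => sq_nonneg _) hx2b hbound
  have habs : Tendsto (fun k : ℕ => |(q k).1|) atTop (nhds 0) := by
    have heq : (fun k : ℕ => |(q k).1|) = (fun x => Real.sqrt x) ∘ (fun k : ℕ => (q k).1 ^ 2) := by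
      funext k; simp [Real.sqrt_sq_eq_abs]
    rw [heq]
    have h := (Real.continuous_sqrt.tendsto 0).comp hsq
    simpa using h
  exact tendsto_zero_iff_abs_tendsto_zero _ |>.mpr habs


end TMH
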